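/- arXiv:2104.12285 — 2 statements merged into one kernel-verified Lean document; each statement's English description precedes it below -/
import Mathlib

section
/- For i ≤ j in Fin m, the Kendall tau distance between the identity permutation ι and the move permutation m_{i,j} equals the displacement: K(ι, m_{i,j}) = j − i. -/
/-!
Against the identity, the Kendall distance `K(ι, q)` counts the inversions of `q⁻¹`.
The inverse of `m_{i,j}` sends `j` to `i`, shifts `i, …, j - 1` up by one and fixes the
rest, so its inversions are exactly the `j - i` pairs `(a, j)` with `i ≤ a < j`.
-/

/-- The underlying function of the move permutation `m_{i,j}` (for `i ≤ j`):
`i ↦ j` and `k ↦ k - 1` for `i < k ≤ j`, all other points fixed. -/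
def moveFun {m : ℕ} (i j : Fin m) (k : Fin m) : Fin m :=
  if k = i then j
  else if i < k ∧ k ≤ j then ⟨k.val - 1, by have := k.isLt; omega⟩
  else k

/-- The inverse function of the move permutation `m_{i,j}` (for `i ≤ j`). -/
def moveInvFun {m : ℕ} (i j : Fin m) (k : Fin m) : Fin m :=
  if k = j then i
  else if h : i ≤ k ∧ k < j then
    ⟨k.val + 1, by have h2 := Fin.lt_def.mp h.2; have := j.isLt; omega⟩
  else k

/-- The move permutation `m_{i,j}` for `i ≤ j`: the cyclic permutation sending
`i ↦ j` and `k ↦ k - 1` for every `k` with `i < k ≤ j`, fixing all other points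
(and the identity if `¬ i ≤ j`). -/
def movePerm {m : ℕ} (i j : Fin m) : Equiv.Perm (Fin m) :=
  if hij : i ≤ j then
    { toFun := moveFun i j
      invFun := moveInvFun i j
      left_inv := by
        intro k
        have hjm := j.isLt
        have him := i.isLt
        have hkm := k.isLt
        unfold moveFun moveInvFun
        split_ifs <;>
          simp_all only [Fin.ext_iff, Fin.lt_def, Fin.le_def, not_and, not_le, not_lt] <;>
          omega
      right_inv := by
        intro k
        have hjm := j.isLt
        have him := i.isLt
        have hkm := k.isLt
        unfold moveFun moveInvFun
        split_ifs <;>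
          simp_all only [Fin.ext_iff, Fin.lt_def, Fin.le_def, not_and, not_le, not_lt] <;>
          omega }
  else 1

/-- The Kendall tau distance between two permutations of `Fin m`: the number of
pairs `i < j` such that exactly one of `p⁻¹ i < p⁻¹ j` and `q⁻¹ i < q⁻¹ j` holds. -/
def kendall {m : ℕ} (p q : Equiv.Perm (Fin m)) : ℕ :=
  (Finset.univ.filter fun ij : Fin m × Fin m =>
    ij.1 < ij.2 ∧ ¬((p⁻¹ ij.1 < p⁻¹ ij.2) ↔ (q⁻¹ ij.1 < q⁻¹ ij.2))).card

theorem kendall_one_left {m : ℕ} (q : Equiv.Perm (Fin m)) :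
    kendall 1 q = (Finset.univ.filter fun ab : Fin m × Fin m =>
      ab.1 < ab.2 ∧ q⁻¹ ab.2 < q⁻¹ ab.1).card := by
  unfold kendall
  congr 1
  refine Finset.filter_congr fun ⟨a, b⟩ _ => and_congr_right fun hab => ?_
  have hne : q⁻¹ a ≠ q⁻¹ b := q⁻¹.injective.ne hab.ne
  simp only [inv_one, Equiv.Perm.one_apply, hab, true_iff, not_lt]
  exact ⟨fun h => lt_of_le_of_ne h hne.symm, le_of_lt⟩

theorem movePerm_inv_apply {m : ℕ} {i j : Fin m} (hij : i ≤ j) (k : Fin m) :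
    (movePerm i j)⁻¹ k = moveInvFun i j k := by
  rw [movePerm, dif_pos hij]
  rfl

theorem moveInvFun_lt_moveInvFun_iff {m : ℕ} {i j a b : Fin m} (hij : i ≤ j) (hab : a < b) :
    moveInvFun i j b < moveInvFun i j a ↔ i ≤ a ∧ b = j := by
  have := j.isLt
  unfold moveInvFun
  split_ifs <;>
    simp only [Fin.ext_iff, Fin.lt_def, Fin.le_def, not_and, not_lt] at * <;>
    omega

theorem kendall_movePerm {m : ℕ} (i j : Fin m) (hij : i ≤ j) :
    kendall (1 : Equiv.Perm (Fin m)) (movePerm i j) = (j : ℕ) - (i : ℕ) := by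
  have hinv : (Finset.univ.filter fun ab : Fin m × Fin m =>
      ab.1 < ab.2 ∧ (movePerm i j)⁻¹ ab.2 < (movePerm i j)⁻¹ ab.1)
      = Finset.Ico i j ×ˢ {j} := by
    ext ⟨a, b⟩
    simp only [Finset.mem_filter, Finset.mem_univ, true_and, Finset.mem_product,
      Finset.mem_Ico, Finset.mem_singleton, movePerm_inv_apply hij]
    constructor
    · rintro ⟨hab, hinv⟩
      obtain ⟨hia, rfl⟩ := (moveInvFun_lt_moveInvFun_iff hij hab).1 hinv
      exact ⟨⟨hia, hab⟩, rfl⟩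
    · rintro ⟨⟨hia, haj⟩, rfl⟩
      exact ⟨haj, (moveInvFun_lt_moveInvFun_iff hij haj).2 ⟨hia, rfl⟩⟩
  rw [kendall_one_left, hinv, Finset.card_product, Finset.card_singleton, mul_one,
    Fin.card_Ico]
end

section
/- Let a and b be lists over a type with decidable equality, of lengths |a| and |b|. The minimum natural number d such that there exists a chain of lists l₀ = a, l₁, …, l_d = b, in which each l_{k+1} is obtained from l_k by either deleting a single entry or inserting a single entry at some position, equals |a| + |b| − 2 · LCS(a, b). -/
/-- Longest common subsequence length. -/
noncomputable def LCS {α : Type*} [DecidableEq α] (a b : List α) : ℕ :=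
  sSup {n | ∃ l : List α, l.Sublist a ∧ l.Sublist b ∧ l.length = n}

/-- `l'` is obtained from `l` by deleting a single entry or inserting a single
entry at some position. -/
def InsDelStep {α : Type*} (l l' : List α) : Prop :=
  (∃ i < l.length, l' = l.eraseIdx i) ∨
  (∃ (x : α) (j : ℕ), j ≤ l.length ∧ l' = l.insertIdx j x)

/-!
The quantity `|l| + |b| - 2 LCS(l, b)` vanishes at `l = b` and drops by at most one along a
single step, since deleting one entry of `l` lowers `LCS(l, b)` by at most one; hence every chain
from `a` to `b` has at least `|a| + |b| - 2 LCS(a, b)` steps. Conversely, deleting the entries of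
`a` outside a longest common subsequence and then inserting the missing entries of `b` is a chain
of exactly that length.
-/

theorem List.Sublist.exists_eraseIdx_sublist_eraseIdx {α : Type*} {m l : List α}
    (h : m.Sublist l) (i : ℕ) : ∃ j, (m.eraseIdx j).Sublist (l.eraseIdx i) := by
  induction h generalizing i with
  | slnil => exact ⟨0, List.Sublist.slnil⟩
  | @cons m l x h ih =>
    cases i with
    | zero => exact ⟨0, (List.eraseIdx_sublist m 0).trans h⟩
    | succ i =>
      obtain ⟨j, hj⟩ := ih i
      exact ⟨j, hj.cons x⟩
  | @cons_cons m l x h ih =>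
    cases i with
    | zero => exact ⟨0, h⟩
    | succ i =>
      obtain ⟨j, hj⟩ := ih i
      exact ⟨j + 1, hj.cons_cons x⟩

section InsDelChain

variable {α : Type*}

theorem InsDelStep.symm {l l' : List α} (h : InsDelStep l l') : InsDelStep l' l := by
  rcases h with ⟨i, hi, rfl⟩ | ⟨x, j, hj, rfl⟩
  · refine Or.inr ⟨l[i], i, ?_, (List.insertIdx_eraseIdx_getElem hi).symm⟩
    rw [List.length_eraseIdx_of_lt hi]
    omega
  · refine Or.inl ⟨j, ?_, (List.eraseIdx_insertIdx_self x).symm⟩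
    rw [List.length_insertIdx_of_le_length hj]
    omega

theorem InsDelStep.cons {l l' : List α} (h : InsDelStep l l') (x : α) :
    InsDelStep (x :: l) (x :: l') := by
  rcases h with ⟨i, hi, rfl⟩ | ⟨y, j, hj, rfl⟩
  · exact Or.inl ⟨i + 1, by simpa using hi, rfl⟩
  · exact Or.inr ⟨y, j + 1, by simpa using hj, rfl⟩

def InsDelChain (d : ℕ) (a b : List α) : Prop :=
  ∃ c : ℕ → List α, c 0 = a ∧ c d = b ∧ ∀ k < d, InsDelStep (c k) (c (k + 1))

namespace InsDelChain

theorem refl (a : List α) : InsDelChain 0 a a :=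
  ⟨fun _ => a, rfl, rfl, fun _ hk => absurd hk (Nat.not_lt_zero _)⟩

theorem single {a b : List α} (h : InsDelStep a b) : InsDelChain 1 a b :=
  ⟨fun k => if k = 0 then a else b, rfl, rfl, fun k hk => by
    obtain rfl : k = 0 := by omega
    exact h⟩

theorem trans {a b e : List α} {d₁ d₂ : ℕ} (h₁ : InsDelChain d₁ a b) (h₂ : InsDelChain d₂ b e) :
    InsDelChain (d₁ + d₂) a e := by
  obtain ⟨c₁, h₁0, h₁d, h₁s⟩ := h₁
  obtain ⟨c₂, h₂0, h₂d, h₂s⟩ := h₂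
  refine ⟨fun k => if k ≤ d₁ then c₁ k else c₂ (k - d₁), by simp [h₁0], ?_, fun k hk => ?_⟩
  · rcases Nat.eq_zero_or_pos d₂ with rfl | hd₂
    · simp [h₁d, ← h₂0, h₂d]
    · simp [show ¬d₁ + d₂ ≤ d₁ by omega, h₂d]
  · rcases Nat.lt_or_ge k d₁ with hk₁ | hk₁
    · simpa [hk₁.le, show k + 1 ≤ d₁ by omega] using h₁s k hk₁
    · have hstep := h₂s (k - d₁) (by omega)
      rw [show k - d₁ + 1 = k + 1 - d₁ by omega] at hstep
      rcases hk₁.eq_or_lt with rfl | hk₁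
      · simpa [h₁d, ← h₂0] using hstep
      · simpa [show ¬k ≤ d₁ by omega, show ¬k + 1 ≤ d₁ by omega] using hstep

theorem symm {a b : List α} {d : ℕ} (h : InsDelChain d a b) : InsDelChain d b a := by
  obtain ⟨c, h0, hd, hs⟩ := h
  refine ⟨fun k => c (d - k), by simpa using hd, by simpa using h0, fun k hk => ?_⟩
  have hstep := (hs (d - (k + 1)) (by omega)).symm
  rwa [show d - (k + 1) + 1 = d - k by omega] at hstep

theorem cons {a b : List α} {d : ℕ} (h : InsDelChain d a b) (x : α) :
    InsDelChain d (x :: a) (x :: b) := by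
  obtain ⟨c, h0, hd, hs⟩ := h
  exact ⟨fun k => x :: c k, congrArg _ h0, congrArg _ hd, fun k hk => (hs k hk).cons x⟩

end InsDelChain

theorem List.Sublist.insDelChain {l a : List α} (h : l.Sublist a) :
    InsDelChain (a.length - l.length) a l := by
  induction h with
  | slnil => exact InsDelChain.refl []
  | @cons l a x h ih =>
    have hdel : InsDelStep (x :: a) a := Or.inl ⟨0, by simp, rfl⟩
    have hlen : (x :: a).length - l.length = 1 + (a.length - l.length) := by
      have := h.length_le
      simp only [List.length_cons]
      omega
    exact hlen ▸ (InsDelChain.single hdel).trans ih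
  | @cons_cons l a x _ ih =>
    simpa only [List.length_cons, Nat.add_sub_add_right] using ih.cons x

end InsDelChain

theorem bddAbove_length_commonSublist {α : Type*} (a b : List α) :
    BddAbove {n | ∃ l : List α, l.Sublist a ∧ l.Sublist b ∧ l.length = n} :=
  ⟨a.length, fun _ ⟨_, hla, _, hl⟩ => hl ▸ hla.length_le⟩

section LCS

variable {α : Type*} [DecidableEq α]

theorem exists_commonSublist_length_eq_lcs (a b : List α) :
    ∃ l : List α, l.Sublist a ∧ l.Sublist b ∧ l.length = LCS a b :=
  show LCS a b ∈ {n | ∃ l : List α, l.Sublist a ∧ l.Sublist b ∧ l.length = n} from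
  Nat.sSup_mem ⟨0, [], List.nil_sublist a, List.nil_sublist b, rfl⟩
    (bddAbove_length_commonSublist a b)

theorem length_le_lcs {a b l : List α} (ha : l.Sublist a) (hb : l.Sublist b) :
    l.length ≤ LCS a b :=
  le_csSup (bddAbove_length_commonSublist a b) ⟨l, ha, hb, rfl⟩

theorem lcs_le_length_left (a b : List α) : LCS a b ≤ a.length := by
  obtain ⟨l, ha, -, hl⟩ := exists_commonSublist_length_eq_lcs a b
  exact hl ▸ ha.length_le

theorem lcs_le_length_right (a b : List α) : LCS a b ≤ b.length := by
  obtain ⟨l, -, hb, hl⟩ := exists_commonSublist_length_eq_lcs a b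
  exact hl ▸ hb.length_le

theorem lcs_self (b : List α) : LCS b b = b.length :=
  (lcs_le_length_left b b).antisymm (length_le_lcs (List.Sublist.refl b) (List.Sublist.refl b))

theorem lcs_eraseIdx_le (l b : List α) (i : ℕ) : LCS (l.eraseIdx i) b ≤ LCS l b := by
  obtain ⟨m, hl, hb, hm⟩ := exists_commonSublist_length_eq_lcs (l.eraseIdx i) b
  exact hm ▸ length_le_lcs (hl.trans (List.eraseIdx_sublist l i)) hb

theorem lcs_le_lcs_eraseIdx_add_one (l b : List α) (i : ℕ) :
    LCS l b ≤ LCS (l.eraseIdx i) b + 1 := by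
  obtain ⟨m, hl, hb, hm⟩ := exists_commonSublist_length_eq_lcs l b
  obtain ⟨j, hj⟩ := hl.exists_eraseIdx_sublist_eraseIdx i
  have hlen : m.length ≤ (m.eraseIdx j).length + 1 := by
    rw [List.length_eraseIdx]; split_ifs <;> omega
  have := length_le_lcs hj ((List.eraseIdx_sublist m j).trans hb)
  omega

theorem lcs_insertIdx_le_add_one (l b : List α) (j : ℕ) (x : α) :
    LCS (l.insertIdx j x) b ≤ LCS l b + 1 := by
  simpa only [List.eraseIdx_insertIdx_self] using lcs_le_lcs_eraseIdx_add_one (l.insertIdx j x) b j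

/-- The subtraction never truncates, as `LCS a b ≤ min |a| |b|`. -/
noncomputable def lcsDist (a b : List α) : ℕ :=
  a.length + b.length - 2 * LCS a b

theorem lcsDist_self (b : List α) : lcsDist b b = 0 := by
  simp only [lcsDist, lcs_self]
  omega

theorem InsDelStep.lcsDist_le {l l' : List α} (h : InsDelStep l l') (b : List α) :
    lcsDist l b ≤ lcsDist l' b + 1 := by
  have := lcs_le_length_left l b
  have := lcs_le_length_left l' b
  have := lcs_le_length_right l' b
  unfold lcsDist
  rcases h with ⟨i, hi, rfl⟩ | ⟨x, j, hj, rfl⟩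
  · have := lcs_eraseIdx_le l b i
    rw [List.length_eraseIdx_of_lt hi]
    omega
  · have := lcs_insertIdx_le_add_one l b j x
    rw [List.length_insertIdx_of_le_length hj]
    omega

theorem insDelChain_lcsDist (a b : List α) : InsDelChain (lcsDist a b) a b := by
  obtain ⟨l, ha, hb, hl⟩ := exists_commonSublist_length_eq_lcs a b
  have hlen : lcsDist a b = (a.length - l.length) + (b.length - l.length) := by
    have := ha.length_le
    have := hb.length_le
    unfold lcsDist
    omega
  exact hlen ▸ ha.insDelChain.trans hb.insDelChain.symm

theorem InsDelChain.lcsDist_le {a b : List α} {d : ℕ} (h : InsDelChain d a b) :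
    lcsDist a b ≤ d := by
  induction d generalizing a with
  | zero =>
    obtain ⟨c, rfl, rfl, -⟩ := h
    simp [lcsDist_self]
  | succ d ih =>
    obtain ⟨c, rfl, hd, hs⟩ := h
    have hfirst : lcsDist (c 0) b ≤ lcsDist (c 1) b + 1 := (hs 0 d.succ_pos).lcsDist_le b
    have hrest : lcsDist (c 1) b ≤ d :=
      ih ⟨fun k => c (k + 1), rfl, hd, fun k hk => hs (k + 1) (by omega)⟩
    omega

end LCS

theorem min_insdel_chain_eq_lcs_distance {α : Type*} [DecidableEq α] (a b : List α) :
    IsLeast {d : ℕ | ∃ c : ℕ → List α, c 0 = a ∧ c d = b ∧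
        ∀ k < d, InsDelStep (c k) (c (k + 1))}
      (a.length + b.length - 2 * LCS a b) :=
  ⟨insDelChain_lcsDist a b, fun _ h => InsDelChain.lcsDist_le h⟩
end
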